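/- Reward sustains committed cooperation over a strictly larger range of participation costs than punishment: assume T > R > P > S, α = 0, and u > (T + P − R − S)/2. Then every ε ≥ 0 for which ACD is risk-dominant against all of ADC, ADD, NCC, NCD, NDC, NDD under the punishment matrix Π_P also makes ACD risk-dominant against all of them under the reward matrix Π_R; moreover, if u > 0, every ε with 2·min{T − S, R − P} ≤ ε < 2(u + min{T − S, R − P}) makes ACD risk-dominant against all six strategies under Π_R but not under Π_P. -/

import Mathlib

/-!
Against a committed defector (ADC, ADD) the incentive acts only inside the commitment, and
paying `(1 − α)u` to ACD or charging it to the defector moves the risk-dominance margin by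
the same `2(1 − α)u`: both schemes need `(1 − α)u > (T + P − R − S)/2`. Against a
non-participant (NCC, NCD, NDC, NDD) a commitment forms only in ACD's self-play, where the
compliance reward is paid to ACD but nobody is punished; ACD's participation bonus `αu`
accrues under both schemes. Hence ACD is risk-dominant against all six
under `Π_R` iff additionally `ε < 2(min{T − S, R − P} + (1 + α)u)`, and under `Π_P` iff
`ε < 2(min{T − S, R − P} + 2αu)`; at `α = 0` the reward window is longer by `2u`.
-/

/-- A strategy in the commitment game: whether to accept a prior commitment
(`commit = true` means "A"), the action if a commitment is formed
(`inAct = true` means "C"), and the action if no commitment is formed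
(`outAct = true` means "C"). -/
structure Strat where
  commit : Bool
  inAct : Bool
  outAct : Bool
deriving DecidableEq

def ACC : Strat := ⟨true, true, true⟩
def ACD : Strat := ⟨true, true, false⟩
def ADC : Strat := ⟨true, false, true⟩
def ADD : Strat := ⟨true, false, false⟩
def NCC : Strat := ⟨false, true, true⟩
def NCD : Strat := ⟨false, true, false⟩
def NDC : Strat := ⟨false, false, true⟩
def NDD : Strat := ⟨false, false, false⟩

/-- Row player's payoff in the one-shot Prisoner's Dilemma with payoffs
`T, R, P, S`; `true` codes cooperation. -/
def pd (T R P S : ℝ) (myC otherC : Bool) : ℝ :=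
  if myC then (if otherC then R else S) else (if otherC then T else P)

/-- The reward payoff matrix `Π_R`: the row player receives its PD payoff
(commitment formed iff both commit; then each pays `ε/2` and plays its
in-commitment action, otherwise both play their no-commitment actions),
plus `α·u` if it accepted the commitment, plus an additional `(1−α)·u`
if a commitment is formed and it cooperates in it. -/
noncomputable def payR (T R P S ε u α : ℝ) (s t : Strat) : ℝ :=
  (if s.commit ∧ t.commit then
      pd T R P S s.inAct t.inAct - ε / 2 + (if s.inAct then (1 - α) * u else 0)
   else pd T R P S s.outAct t.outAct)
  + (if s.commit then α * u else 0)

/-- The punishment payoff matrix `Π_P`: as `Π_R` except that instead of the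
reward `(1−α)·u` for compliance, the amount `(1−α)·u` is subtracted when a
commitment is formed and the row player defects in it. -/
noncomputable def payP (T R P S ε u α : ℝ) (s t : Strat) : ℝ :=
  (if s.commit ∧ t.commit then
      pd T R P S s.inAct t.inAct - ε / 2 - (if s.inAct then 0 else (1 - α) * u)
   else pd T R P S s.outAct t.outAct)
  + (if s.commit then α * u else 0)

/-- Flip the participation decision of a strategy (A ↔ N). -/
def flipPart (s : Strat) : Strat := ⟨!s.commit, s.inAct, s.outAct⟩

/-- The noisy payoff matrix `Π̃`: with probability `χ` each player independently
errs in its decision whether to join the commitment. -/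
noncomputable def noisy (χ : ℝ) (M : Strat → Strat → ℝ) (s t : Strat) : ℝ :=
  (1 - χ) ^ 2 * M s t + χ * (1 - χ) * (M (flipPart s) t + M s (flipPart t))
    + χ ^ 2 * M (flipPart s) (flipPart t)

/-- Strategy `a` is risk-dominant against strategy `b` under payoff matrix `Π`. -/
def RiskDom (M : Strat → Strat → ℝ) (a b : Strat) : Prop :=
  M a a + M a b > M b a + M b b

/-- `x` is an evolutionarily stable strategy (ESS) of the payoff matrix `Π`. -/
def IsESS (M : Strat → Strat → ℝ) (x : Strat) : Prop :=
  ∀ y : Strat, y ≠ x → M x x > M y x ∨ (M x x = M y x ∧ M x y > M y y)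

def ACDRiskDominant (M : Strat → Strat → ℝ) : Prop :=
  ∀ B ∈ ({ADC, ADD, NCC, NCD, NDC, NDD} : Set Strat), RiskDom M ACD B

theorem acdRiskDominant_iff (M : Strat → Strat → ℝ) :
    ACDRiskDominant M ↔
      RiskDom M ACD ⟨true, false, true⟩ ∧ RiskDom M ACD ⟨true, false, false⟩ ∧
      RiskDom M ACD ⟨false, true, true⟩ ∧ RiskDom M ACD ⟨false, true, false⟩ ∧
      RiskDom M ACD ⟨false, false, true⟩ ∧ RiskDom M ACD ⟨false, false, false⟩ := by
  simp only [ACDRiskDominant, Set.mem_insert_iff, Set.mem_singleton_iff, forall_eq_or_imp,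
    forall_eq]
  rfl

theorem lt_two_mul_min_add_iff {a b c ε : ℝ} :
    ε < 2 * (min a b + c) ↔ ε < 2 * (a + c) ∧ ε < 2 * (b + c) := by
  rw [← min_add_add_right, mul_min_of_nonneg _ _ zero_le_two, lt_min_iff]

section Opponents

variable (T R P S ε u α : ℝ)

theorem riskDom_payR_ACD_committed_defector (y : Bool) :
    RiskDom (payR T R P S ε u α) ACD ⟨true, false, y⟩ ↔ T + P - R - S < 2 * ((1 - α) * u) := by
  simp only [RiskDom, payR, ACD, pd, and_self, ↓reduceIte, Bool.false_eq_true, add_zero,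
    gt_iff_lt]
  constructor <;> intro <;> linarith

theorem riskDom_payP_ACD_committed_defector (y : Bool) :
    RiskDom (payP T R P S ε u α) ACD ⟨true, false, y⟩ ↔ T + P - R - S < 2 * ((1 - α) * u) := by
  simp only [RiskDom, payP, ACD, pd, and_self, ↓reduceIte, Bool.false_eq_true, sub_zero,
    gt_iff_lt]
  constructor <;> intro <;> linarith

theorem riskDom_payR_ACD_outsider_cooperator (x : Bool) :
    RiskDom (payR T R P S ε u α) ACD ⟨false, x, true⟩ ↔ ε < 2 * (T - S + (1 + α) * u) := by
  simp only [RiskDom, payR, ACD, pd, and_self, and_false, and_true, ↓reduceIte, Bool.false_eq_true,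
    add_zero, gt_iff_lt]
  constructor <;> intro <;> linarith

theorem riskDom_payP_ACD_outsider_cooperator (x : Bool) :
    RiskDom (payP T R P S ε u α) ACD ⟨false, x, true⟩ ↔ ε < 2 * (T - S + 2 * α * u) := by
  simp only [RiskDom, payP, ACD, pd, and_self, and_false, and_true, ↓reduceIte, Bool.false_eq_true,
    sub_zero, gt_iff_lt]
  constructor <;> intro <;> linarith

theorem riskDom_payR_ACD_outsider_defector (x : Bool) :
    RiskDom (payR T R P S ε u α) ACD ⟨false, x, false⟩ ↔ ε < 2 * (R - P + (1 + α) * u) := by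
  simp only [RiskDom, payR, ACD, pd, and_self, and_false, and_true, ↓reduceIte, Bool.false_eq_true,
    add_zero, gt_iff_lt]
  constructor <;> intro <;> linarith

theorem riskDom_payP_ACD_outsider_defector (x : Bool) :
    RiskDom (payP T R P S ε u α) ACD ⟨false, x, false⟩ ↔ ε < 2 * (R - P + 2 * α * u) := by
  simp only [RiskDom, payP, ACD, pd, and_self, and_false, and_true, ↓reduceIte, Bool.false_eq_true,
    sub_zero, gt_iff_lt]
  constructor <;> intro <;> linarith

theorem acdRiskDominant_payR_iff :
    ACDRiskDominant (payR T R P S ε u α) ↔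
      T + P - R - S < 2 * ((1 - α) * u) ∧ ε < 2 * (min (T - S) (R - P) + (1 + α) * u) := by
  rw [acdRiskDominant_iff, lt_two_mul_min_add_iff]
  simp only [riskDom_payR_ACD_committed_defector, riskDom_payR_ACD_outsider_cooperator,
    riskDom_payR_ACD_outsider_defector]
  tauto

theorem acdRiskDominant_payP_iff :
    ACDRiskDominant (payP T R P S ε u α) ↔
      T + P - R - S < 2 * ((1 - α) * u) ∧ ε < 2 * (min (T - S) (R - P) + 2 * α * u) := by
  rw [acdRiskDominant_iff, lt_two_mul_min_add_iff]
  simp only [riskDom_payP_ACD_committed_defector, riskDom_payP_ACD_outsider_cooperator,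
    riskDom_payP_ACD_outsider_defector]
  tauto

end Opponents

theorem reward_larger_range_than_punishment_general (T R P S u : ℝ)
    (hTR : T > R) (hPS : P > S)
    (hu : u > (T + P - R - S) / 2) :
    (∀ ε : ℝ, 0 ≤ ε →
      (∀ B ∈ ({ADC, ADD, NCC, NCD, NDC, NDD} : Set Strat),
          RiskDom (payP T R P S ε u 0) ACD B) →
      (∀ B ∈ ({ADC, ADD, NCC, NCD, NDC, NDD} : Set Strat),
          RiskDom (payR T R P S ε u 0) ACD B)) ∧
    (u > 0 → ∀ ε : ℝ,
      2 * min (T - S) (R - P) ≤ ε → ε < 2 * (u + min (T - S) (R - P)) →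
      (∀ B ∈ ({ADC, ADD, NCC, NCD, NDC, NDD} : Set Strat),
          RiskDom (payR T R P S ε u 0) ACD B) ∧
      ¬ (∀ B ∈ ({ADC, ADD, NCC, NCD, NDC, NDD} : Set Strat),
          RiskDom (payP T R P S ε u 0) ACD B)) := by
  have hu₀ : 0 < u := by linarith
  have reward_iff (ε : ℝ) : ACDRiskDominant (payR T R P S ε u 0) ↔
      T + P - R - S < 2 * u ∧ ε < 2 * (min (T - S) (R - P) + u) := by
    simpa using acdRiskDominant_payR_iff T R P S ε u 0
  have punish_iff (ε : ℝ) : ACDRiskDominant (payP T R P S ε u 0) ↔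
      T + P - R - S < 2 * u ∧ ε < 2 * min (T - S) (R - P) := by
    simpa using acdRiskDominant_payP_iff T R P S ε u 0
  refine ⟨fun ε _ hPε => ?_, fun _ ε hε₁ hε₂ => ⟨?_, fun hPε => ?_⟩⟩
  · obtain ⟨hu', hε⟩ := (punish_iff ε).1 hPε
    exact (reward_iff ε).2 ⟨hu', by linarith⟩
  · exact (reward_iff ε).2 ⟨by linarith, by linarith⟩
  · exact hε₁.not_gt ((punish_iff ε).1 hPε).2

/-- **Reward sustains committed cooperation over a strictly larger range of
participation costs than punishment.**
Assume `T > R > P > S`, `α = 0`, and `u > (T + P − R − S)/2`. Whenever ACD is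
risk-dominant against all of ADC, ADD, NCC, NCD, NDC, NDD under the punishment
matrix `Π_P`, it is also risk-dominant against all of them under the reward matrix
`Π_R`; moreover, if `u > 0`, every `ε` with
`2·min{T − S, R − P} ≤ ε < 2(u + min{T − S, R − P})` makes ACD risk-dominant against
all six under `Π_R` but not under `Π_P`. -/
theorem reward_larger_range_than_punishment (T R P S u : ℝ)
    (hTR : T > R) (hRP : R > P) (hPS : P > S)
    (hu : u > (T + P - R - S) / 2) :
    (∀ ε : ℝ, 0 ≤ ε →
      (∀ B ∈ ({ADC, ADD, NCC, NCD, NDC, NDD} : Set Strat),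
          RiskDom (payP T R P S ε u 0) ACD B) →
      (∀ B ∈ ({ADC, ADD, NCC, NCD, NDC, NDD} : Set Strat),
          RiskDom (payR T R P S ε u 0) ACD B)) ∧
    (u > 0 → ∀ ε : ℝ,
      2 * min (T - S) (R - P) ≤ ε → ε < 2 * (u + min (T - S) (R - P)) →
      (∀ B ∈ ({ADC, ADD, NCC, NCD, NDC, NDD} : Set Strat),
          RiskDom (payR T R P S ε u 0) ACD B) ∧
      ¬ (∀ B ∈ ({ADC, ADD, NCC, NCD, NDC, NDD} : Set Strat),
          RiskDom (payP T R P S ε u 0) ACD B)) :=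
  reward_larger_range_than_punishment_general T R P S u hTR hPS hu
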